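/- Fix λ > 0, α ∈ [0,1], t > 0. Define p(t; y₀, ξ) for ξ·y₀ ≤ 0 by p(t;y₀,ξ) = (1+(2α-1)sgn(ξ)) · (e^{-2λ|ξ|}/√(2πt)) · [exp(-(|ξ|+|y₀|-λt)²/(2t)) + λ∫_{|ξ|+|y₀|}^∞ exp(-(u-λt)²/(2t)) du]. Then as t → ∞, p(t; y₀, ξ) → 2αλ e^{-2λξ}·1_{ξ>0} + 2(1-α)λ e^{2λξ}·1_{ξ≤0} for every fixed ξ with ξ·y₀ ≤ 0, ξ ≠ 0. -/

import Mathlib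

/-!
Up to the factor `(1 + (2α - 1) sgn ξ) e^{-2λ|ξ|}`, `p(t)` is the Gaussian kernel
`e^{-(a - λt)²/2t} / √(2πt)` at `a = |ξ| + |y₀|` plus `λ` times the mass that the Gaussian law
with mean `λt` and variance `t` puts on `(a, ∞)`. The kernel is at most `(2πt)^{-1/2} → 0`.
The substitution `v = (u - λt)/√t` turns the mass into the standard normal mass of
`((a - λt)/√t, ∞)`, whose lower end tends to `-∞` since `λ > 0`; so the mass tends to `1`
and `p(t) → λ (1 + (2α - 1) sgn ξ) e^{-2λ|ξ|} = p_∞(ξ)`.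
-/

open Real MeasureTheory Filter

/-- Left-continuous signum: `1` for positive arguments, `-1` otherwise. -/
noncomputable def sgnL (x : ℝ) : ℝ := if 0 < x then 1 else -1

/-- The off-diagonal branch (`ξ·y₀ ≤ 0`) of the transition density of skew
bang-bang Brownian motion. -/
noncomputable def pOff (lam α t y₀ ξ : ℝ) : ℝ :=
  (1 + (2 * α - 1) * sgnL ξ) * (Real.exp (-(2 * lam * |ξ|)) / Real.sqrt (2 * Real.pi * t)) *
    (Real.exp (-(|ξ| + |y₀| - lam * t) ^ 2 / (2 * t)) +
      lam * ∫ u in Set.Ioi (|ξ| + |y₀|), Real.exp (-(u - lam * t) ^ 2 / (2 * t)))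

/-- The stationary double-exponential density. -/
noncomputable def pinf (lam α ξ : ℝ) : ℝ :=
  if 0 < ξ then 2 * α * lam * Real.exp (-(2 * lam * ξ))
  else 2 * (1 - α) * lam * Real.exp (2 * lam * ξ)

open Set Topology

section SetIntegralIoi

variable {E : Type*} [NormedAddCommGroup E] [NormedSpace ℝ E]

theorem setIntegral_Ioi_comp_add_right (g : ℝ → E) (a c : ℝ) :
    ∫ x in Ioi a, g (x + c) = ∫ x in Ioi (a + c), g x := by
  simpa [preimage_add_const_Ioi] using
    (measurePreserving_add_right volume c).setIntegral_preimage_emb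
      (measurableEmbedding_addRight c) g (Ioi (a + c))

theorem setIntegral_Ioi_comp_sub_div (g : ℝ → E) (a m : ℝ) {s : ℝ} (hs : 0 < s) :
    ∫ x in Ioi a, g ((x - m) / s) = s • ∫ x in Ioi ((a - m) / s), g x := by
  have := setIntegral_Ioi_comp_add_right (fun x => g ((x - m) / s)) (a - m) m
  simp only [add_sub_cancel_right, sub_add_cancel] at this
  rw [← this]
  simpa [div_eq_inv_mul] using integral_comp_mul_left_Ioi g (a - m) (inv_pos.2 hs)

theorem tendsto_setIntegral_Ioi_atBot {f : ℝ → E} (hf : Integrable f) :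
    Tendsto (fun c => ∫ x in Ioi c, f x) atBot (𝓝 (∫ x, f x)) := by
  simp_rw [← integral_indicator measurableSet_Ioi]
  refine tendsto_integral_filter_of_dominated_convergence (fun x => ‖f x‖)
    (Eventually.of_forall fun c => hf.aestronglyMeasurable.indicator measurableSet_Ioi)
    (Eventually.of_forall fun c => Eventually.of_forall fun x => norm_indicator_le_norm_self _ _)
    hf.norm (Eventually.of_forall fun x => ?_)
  refine tendsto_const_nhds.congr' ?_
  filter_upwards [eventually_lt_atBot x] with c hc
  exact (indicator_of_mem hc f).symm

end SetIntegralIoi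

theorem integrable_exp_neg_sq_div_two : Integrable fun v : ℝ => exp (-v ^ 2 / 2) := by
  simpa [neg_div, div_eq_inv_mul] using integrable_exp_neg_mul_sq (b := 1 / 2) one_half_pos

theorem integral_exp_neg_sq_div_two : ∫ v : ℝ, exp (-v ^ 2 / 2) = √(2 * π) := by
  have := integral_gaussian (1 / 2)
  simp only [one_div, div_inv_eq_mul] at this
  rw [mul_comm, ← this]
  congr 1 with v
  ring_nf

theorem tendsto_sub_mul_div_sqrt_atBot (a : ℝ) {lam : ℝ} (hlam : 0 < lam) :
    Tendsto (fun t => (a - lam * t) / √t) atTop atBot := by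
  have hsplit : (fun t => a * (√t)⁻¹ + -(lam * √t)) =ᶠ[atTop] fun t => (a - lam * t) / √t := by
    filter_upwards [eventually_gt_atTop 0] with t ht
    field_simp
    rw [sq_sqrt ht.le]
    ring
  refine Tendsto.congr' hsplit (Tendsto.add_atBot (C := a * 0) ?_ ?_)
  · exact (tendsto_inv_atTop_zero.comp tendsto_sqrt_atTop).const_mul a
  · exact tendsto_neg_atTop_atBot.comp (tendsto_sqrt_atTop.const_mul_atTop hlam)

theorem tendsto_exp_neg_sq_div_sqrt (a lam : ℝ) :
    Tendsto (fun t => exp (-(a - lam * t) ^ 2 / (2 * t)) / √(2 * π * t)) atTop (𝓝 0) := by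
  have hsqrt : Tendsto (fun t => √(2 * π * t)) atTop atTop :=
    tendsto_sqrt_atTop.comp (tendsto_id.const_mul_atTop (by positivity))
  refine squeeze_zero' (Eventually.of_forall fun t => by positivity) ?_
    (tendsto_inv_atTop_zero.comp hsqrt)
  filter_upwards [eventually_ge_atTop 0] with t ht
  rw [Function.comp_apply, ← one_div]
  refine div_le_div_of_nonneg_right (exp_le_one_iff.2 ?_) (sqrt_nonneg _)
  exact div_nonpos_of_nonpos_of_nonneg (neg_nonpos.2 (sq_nonneg _)) (by positivity)

theorem integral_Ioi_exp_neg_sq_sub_div (a m : ℝ) {t : ℝ} (ht : 0 < t) :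
    ∫ u in Ioi a, exp (-(u - m) ^ 2 / (2 * t)) =
      √t * ∫ v in Ioi ((a - m) / √t), exp (-v ^ 2 / 2) := by
  rw [← smul_eq_mul (√t), ← setIntegral_Ioi_comp_sub_div (fun v => exp (-v ^ 2 / 2)) a m
    (sqrt_pos.2 ht)]
  congr 1 with u
  rw [div_pow, sq_sqrt ht.le]
  ring_nf

theorem tendsto_integral_Ioi_gaussian_drift (a : ℝ) {lam : ℝ} (hlam : 0 < lam) :
    Tendsto (fun t => (∫ u in Ioi a, exp (-(u - lam * t) ^ 2 / (2 * t))) / √(2 * π * t))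
      atTop (𝓝 1) := by
  have hπ : √(2 * π) ≠ 0 := (sqrt_pos.2 (by positivity)).ne'
  have hlim := ((tendsto_setIntegral_Ioi_atBot integrable_exp_neg_sq_div_two).comp
    (tendsto_sub_mul_div_sqrt_atBot a hlam)).div_const (√(2 * π))
  rw [integral_exp_neg_sq_div_two, div_self hπ] at hlim
  refine hlim.congr' ?_
  filter_upwards [eventually_gt_atTop 0] with t ht
  rw [Function.comp_apply, integral_Ioi_exp_neg_sq_sub_div a _ ht,
    sqrt_mul (by positivity : 0 ≤ 2 * π), mul_comm √(2 * π),
    mul_div_mul_left _ _ (sqrt_pos.2 ht).ne']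

theorem pinf_eq_of_ne_zero (lam α : ℝ) {ξ : ℝ} (hξ : ξ ≠ 0) :
    pinf lam α ξ = (1 + (2 * α - 1) * sgnL ξ) * exp (-(2 * lam * |ξ|)) * lam := by
  rcases hξ.lt_or_gt with hneg | hpos
  · rw [pinf, sgnL, if_neg hneg.not_gt, if_neg hneg.not_gt, abs_of_neg hneg]
    ring_nf
  · rw [pinf, sgnL, if_pos hpos, if_pos hpos, abs_of_pos hpos]
    ring

theorem stmt_12_general (lam α y₀ ξ : ℝ) (hlam : 0 < lam) (hξ : ξ ≠ 0) :
    Tendsto (fun t => pOff lam α t y₀ ξ) atTop (nhds (pinf lam α ξ)) := by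
  have hlim := ((tendsto_exp_neg_sq_div_sqrt (|ξ| + |y₀|) lam).add
    ((tendsto_integral_Ioi_gaussian_drift (|ξ| + |y₀|) hlam).const_mul lam)).const_mul
    ((1 + (2 * α - 1) * sgnL ξ) * exp (-(2 * lam * |ξ|)))
  rw [zero_add, mul_one, ← pinf_eq_of_ne_zero lam α hξ] at hlim
  refine hlim.congr fun t => ?_
  rw [pOff]
  ring

/-- As `t → ∞`, the off-diagonal transition density `p(t; y₀, ξ)` converges to
the stationary density `p_∞(ξ)`, for every fixed `ξ ≠ 0` with `ξ·y₀ ≤ 0`. -/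
theorem stmt_12 (lam α y₀ ξ : ℝ) (hlam : 0 < lam) (hα : α ∈ Set.Icc (0 : ℝ) 1)
    (hξy : ξ * y₀ ≤ 0) (hξ : ξ ≠ 0) :
    Tendsto (fun t => pOff lam α t y₀ ξ) atTop (nhds (pinf lam α ξ)) :=
  stmt_12_general lam α y₀ ξ hlam hξ
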